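/- Let K_n denote the set of polynomials over ℕ (with zero constant term) whose complexity in the polynomial ring is exactly n. Then |K_n| ≤ n^{n−1} for all n ≥ 1. -/
import Mathlib


open Polynomial

/-- Expressions built from a single symbol `x` using addition and multiplication. -/
inductive Expr where
  | x : Expr
  | add : Expr → Expr → Expr
  | mul : Expr → Expr → Expr

/-- The size of an expression: the number of occurrences of `x`. -/
def Expr.size : Expr → ℕ
  | .x => 1
  | .add a b => a.size + b.size
  | .mul a b => a.size + b.size

/-- Evaluate an expression, sending the symbol `x` to `z`. -/
def Expr.eval {R : Type*} [Add R] [Mul R] (z : R) : Expr → R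
  | .x => z
  | .add a b => a.eval z + b.eval z
  | .mul a b => a.eval z * b.eval z

/-- The complexity of a polynomial `f ∈ ℕ[X]`: the least number of `x`'s in an
expression evaluating to `f` at `x = X`. -/
noncomputable def polyComplexity (f : Polynomial ℕ) : ℕ :=
  sInf {m | ∃ e : Expr, e.size = m ∧ e.eval (Polynomial.X : Polynomial ℕ) = f}

/-- The `n`-th complexity class: polynomials over `ℕ` (expressible, hence with zero
constant term) whose complexity is exactly `n`. -/
noncomputable def K (n : ℕ) : Set (Polynomial ℕ) :=
  {f | (∃ e : Expr, e.eval (Polynomial.X : Polynomial ℕ) = f) ∧ polyComplexity f = n}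

lemma Expr.one_le_size (e : Expr) : 1 ≤ e.size := by
  induction e with
  | x => simp [Expr.size]
  | add a b ha hb => simp only [Expr.size]; omega
  | mul a b ha hb => simp only [Expr.size]; omega

lemma polyComplexity_le (e : Expr) :
    polyComplexity (e.eval (Polynomial.X : Polynomial ℕ)) ≤ e.size :=
  Nat.sInf_le ⟨e, rfl, rfl⟩

lemma exists_min_expr {f : Polynomial ℕ} (h : ∃ e : Expr, e.eval (Polynomial.X : Polynomial ℕ) = f) :
    ∃ e : Expr, e.size = polyComplexity f ∧ e.eval (Polynomial.X : Polynomial ℕ) = f := by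
  obtain ⟨e, he⟩ := h
  have hne : {m | ∃ e : Expr, e.size = m ∧ e.eval (Polynomial.X : Polynomial ℕ) = f}.Nonempty :=
    ⟨e.size, e, rfl, he⟩
  exact Nat.sInf_mem hne

/-- If an expression `C a b` of combined size realizes the minimum complexity,
then the sub-evaluations have complexity exactly their sizes. -/
lemma sub_exact {op : Polynomial ℕ → Polynomial ℕ → Polynomial ℕ} {C : Expr → Expr → Expr}
    (hsz : ∀ a b : Expr, (C a b).size = a.size + b.size)
    (hev : ∀ a b : Expr, (C a b).eval (Polynomial.X : Polynomial ℕ)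
      = op (a.eval Polynomial.X) (b.eval Polynomial.X))
    (a b : Expr)
    (hcomp : a.size + b.size ≤ polyComplexity (op (a.eval Polynomial.X) (b.eval Polynomial.X))) :
    a.eval (Polynomial.X : Polynomial ℕ) ∈ K a.size ∧
      b.eval (Polynomial.X : Polynomial ℕ) ∈ K b.size := by
  set g := a.eval (Polynomial.X : Polynomial ℕ) with hg
  set h := b.eval (Polynomial.X : Polynomial ℕ) with hh
  obtain ⟨a', ha1, ha2⟩ := exists_min_expr (f := g) ⟨a, rfl⟩
  obtain ⟨b', hb1, hb2⟩ := exists_min_expr (f := h) ⟨b, rfl⟩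
  have hia : polyComplexity g ≤ a.size := polyComplexity_le a
  have hib : polyComplexity h ≤ b.size := polyComplexity_le b
  have hle : polyComplexity (op g h) ≤ polyComplexity g + polyComplexity h := by
    have : (C a' b').eval (Polynomial.X : Polynomial ℕ) = op g h := by
      rw [hev, ha2, hb2]
    have h2 := polyComplexity_le (C a' b')
    rw [this, hsz, ha1, hb1] at h2
    exact h2
  have hae : polyComplexity g = a.size := by omega
  have hbe : polyComplexity h = b.size := by omega
  exact ⟨⟨⟨a, rfl⟩, hae⟩, ⟨⟨b, rfl⟩, hbe⟩⟩

lemma decomp {n : ℕ} (hn : 2 ≤ n) {f : Polynomial ℕ} (hf : f ∈ K n) :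
    ∃ i, 1 ≤ i ∧ i ≤ n / 2 ∧
      ∃ g h, g ∈ K i ∧ h ∈ K (n - i) ∧ (f = g + h ∨ f = g * h) := by
  obtain ⟨hex, hc⟩ := hf
  obtain ⟨e, hsize, heval⟩ := exists_min_expr hex
  rw [hc] at hsize
  cases e with
  | x => simp [Expr.size] at hsize; omega
  | add a b =>
    have hsz : a.size + b.size = n := hsize
    have hkey := sub_exact (op := (· + ·)) (C := .add) (fun _ _ => rfl) (fun _ _ => rfl) a b
      (by
        show a.size + b.size ≤ polyComplexity (a.eval Polynomial.X + b.eval Polynomial.X)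
        have : (Expr.add a b).eval (Polynomial.X : Polynomial ℕ)
            = a.eval Polynomial.X + b.eval Polynomial.X := rfl
        rw [← this, heval, hc]; omega)
    have ha1 := a.one_le_size
    have hb1 := b.one_le_size
    by_cases hcase : a.size ≤ n / 2
    · refine ⟨a.size, ha1, hcase, a.eval Polynomial.X, b.eval Polynomial.X, hkey.1, ?_, Or.inl ?_⟩
      · have : n - a.size = b.size := by omega
        rw [this]; exact hkey.2
      · rw [← heval]; rfl
    · refine ⟨b.size, hb1, by omega, b.eval Polynomial.X, a.eval Polynomial.X, hkey.2, ?_, Or.inl ?_⟩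
      · have : n - b.size = a.size := by omega
        rw [this]; exact hkey.1
      · rw [← heval]; show _ = _ + _; rw [add_comm]; rfl
  | mul a b =>
    have hsz : a.size + b.size = n := hsize
    have hkey := sub_exact (op := (· * ·)) (C := .mul) (fun _ _ => rfl) (fun _ _ => rfl) a b
      (by
        show a.size + b.size ≤ polyComplexity (a.eval Polynomial.X * b.eval Polynomial.X)
        have : (Expr.mul a b).eval (Polynomial.X : Polynomial ℕ)
            = a.eval Polynomial.X * b.eval Polynomial.X := rfl
        rw [← this, heval, hc]; omega)
    have ha1 := a.one_le_size
    have hb1 := b.one_le_size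
    by_cases hcase : a.size ≤ n / 2
    · refine ⟨a.size, ha1, hcase, a.eval Polynomial.X, b.eval Polynomial.X, hkey.1, ?_, Or.inr ?_⟩
      · have : n - a.size = b.size := by omega
        rw [this]; exact hkey.2
      · rw [← heval]; rfl
    · refine ⟨b.size, hb1, by omega, b.eval Polynomial.X, a.eval Polynomial.X, hkey.2, ?_, Or.inr ?_⟩
      · have : n - b.size = a.size := by omega
        rw [this]; exact hkey.1
      · rw [← heval]; show _ = _ * _; rw [mul_comm]; rfl

lemma main_bound : ∀ n, 1 ≤ n → ∃ s : Finset (Polynomial ℕ), K n ⊆ ↑s ∧ s.card ≤ n ^ (n - 1) := by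
  intro n
  induction n using Nat.strong_induction_on with
  | _ n ih =>
  intro hn
  rcases eq_or_lt_of_le hn with h1 | h2
  · refine ⟨{Polynomial.X}, ?_, by simp [← h1]⟩
    intro f hf
    obtain ⟨hex, hc⟩ := hf
    obtain ⟨e, hsize, heval⟩ := exists_min_expr hex
    rw [hc, ← h1] at hsize
    cases e with
    | x => simp [← heval]; rfl
    | add a b =>
      have := a.one_le_size; have := b.one_le_size
      simp only [Expr.size] at hsize; omega
    | mul a b =>
      have := a.one_le_size; have := b.one_le_size
      simp only [Expr.size] at hsize; omega
  · have hn2 : 2 ≤ n := h2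
    have H : ∀ i : ℕ, ∃ s : Finset (Polynomial ℕ),
        (1 ≤ i ∧ i < n) → (K i ⊆ ↑s ∧ s.card ≤ i ^ (i - 1)) := by
      intro i
      by_cases h : 1 ≤ i ∧ i < n
      · obtain ⟨s, h1, h2⟩ := ih i h.2 h.1
        exact ⟨s, fun _ => ⟨h1, h2⟩⟩
      · exact ⟨∅, fun hc => absurd hc h⟩
    choose s hs using H
    refine ⟨(Finset.Icc 1 (n / 2)).biUnion (fun i =>
      Finset.image₂ (· + ·) (s i) (s (n - i)) ∪ Finset.image₂ (· * ·) (s i) (s (n - i))),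
      ?_, ?_⟩
    · intro f hf
      obtain ⟨i, hi1, hi2, g, h, hg, hh, hfeq⟩ := decomp hn2 hf
      have hiltn : i < n := by omega
      have hni : 1 ≤ n - i ∧ n - i < n := by omega
      have hgs : g ∈ s i := (hs i ⟨hi1, hiltn⟩).1 hg
      have hhs : h ∈ s (n - i) := (hs (n - i) hni).1 hh
      simp only [Finset.coe_biUnion, Set.mem_iUnion, Finset.mem_coe, Finset.mem_union,
        Finset.mem_Icc]
      refine ⟨i, ⟨hi1, hi2⟩, ?_⟩
      rcases hfeq with rfl | rfl
      · exact Or.inl (Finset.mem_image₂_of_mem hgs hhs)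
      · exact Or.inr (Finset.mem_image₂_of_mem hgs hhs)
    · calc ((Finset.Icc 1 (n / 2)).biUnion _).card
          ≤ ∑ i ∈ Finset.Icc 1 (n / 2),
            (Finset.image₂ (· + ·) (s i) (s (n - i)) ∪
              Finset.image₂ (· * ·) (s i) (s (n - i))).card := Finset.card_biUnion_le
        _ ≤ ∑ i ∈ Finset.Icc 1 (n / 2), 2 * n ^ (n - 2) := by
            apply Finset.sum_le_sum
            intro i hi
            rw [Finset.mem_Icc] at hi
            have hiltn : i < n := by omega
            have hni : 1 ≤ n - i ∧ n - i < n := by omega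
            have hci : (s i).card ≤ i ^ (i - 1) := (hs i ⟨hi.1, hiltn⟩).2
            have hcni : (s (n - i)).card ≤ (n - i) ^ (n - i - 1) := (hs (n - i) hni).2
            have hterm : (s i).card * (s (n - i)).card ≤ n ^ (n - 2) := by
              calc (s i).card * (s (n - i)).card
                  ≤ i ^ (i - 1) * (n - i) ^ (n - i - 1) := Nat.mul_le_mul hci hcni
                _ ≤ n ^ (i - 1) * n ^ (n - i - 1) :=
                    Nat.mul_le_mul (Nat.pow_le_pow_left (by omega) _)
                      (Nat.pow_le_pow_left (by omega) _)
                _ = n ^ (i - 1 + (n - i - 1)) := (pow_add n _ _).symm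
                _ = n ^ (n - 2) := by congr 1; omega
            calc (Finset.image₂ (· + ·) (s i) (s (n - i)) ∪
                  Finset.image₂ (· * ·) (s i) (s (n - i))).card
                ≤ (Finset.image₂ (· + ·) (s i) (s (n - i))).card +
                  (Finset.image₂ (· * ·) (s i) (s (n - i))).card := Finset.card_union_le _ _
              _ ≤ (s i).card * (s (n - i)).card + (s i).card * (s (n - i)).card :=
                  Nat.add_le_add (Finset.card_image₂_le _ _ _) (Finset.card_image₂_le _ _ _)
              _ ≤ 2 * n ^ (n - 2) := by omega
        _ = (Finset.Icc 1 (n / 2)).card * (2 * n ^ (n - 2)) := Finset.sum_const _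
        _ ≤ (n / 2) * (2 * n ^ (n - 2)) := by
            apply Nat.mul_le_mul_right
            simp [Nat.card_Icc]
        _ ≤ n ^ (n - 1) := by
            have : (n / 2) * 2 ≤ n := by omega
            calc (n / 2) * (2 * n ^ (n - 2)) = ((n / 2) * 2) * n ^ (n - 2) := by ring
              _ ≤ n * n ^ (n - 2) := Nat.mul_le_mul_right _ this
              _ = n ^ (n - 1) := by
                  rw [← pow_succ']
                  congr 1; omega

theorem card_complexity_class_le (n : ℕ) (hn : 1 ≤ n) :
    (K n).ncard ≤ n ^ (n - 1) := by
  obtain ⟨s, hsub, hcard⟩ := main_bound n hn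
  calc (K n).ncard ≤ (↑s : Set (Polynomial ℕ)).ncard :=
        Set.ncard_le_ncard hsub s.finite_toSet
    _ = s.card := Set.ncard_coe_finset s
    _ ≤ n ^ (n - 1) := hcard
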